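/- arXiv:2402.08591 — 4 statements merged into one kernel-verified Lean document; each statement's English description precedes it below -/
import Mathlib

section
/- Let (Ω, μ) be a measure space, 2 ≤ p < ∞, M, N ⊆ L^p(Ω, μ) subsets, A : M → L^p(Ω, μ) and B : N → L^p(Ω, μ) arbitrary maps, f ∈ M ∩ N, and a, b ∈ ℂ. Then for every bounded linear functional φ on L^p(Ω, μ) with ‖φ‖ ≤ 1 and φ(f) = 0, one has ‖Af − a·f‖_p^p + ‖Bf − b·f‖_p^p ≥ (1/2^{p−1}) (|φ((A+B)f)|^p + |φ((A−B)f)|^p), where (A+B)f := Af + Bf and (A−B)f := Af − Bf. -/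
/-! Since `φ f = 0`, the two numbers `φ((A ± B) f)` are `φ u ± φ v` with `u = A f - a f` and
`v = B f - b f`. Clarkson's inequality in the Hilbert space `ℂ`, a consequence of the
parallelogram law and convexity of `t ↦ t ^ (p / 2)`, bounds `|φ u ± φ v| ^ p` by
`2 ^ (p - 1) (|φ u| ^ p + |φ v| ^ p)`, and `‖φ‖ ≤ 1` gives `|φ u| ≤ ‖u‖`, `|φ v| ≤ ‖v‖`. -/

open MeasureTheory

lemma Real.rpow_add_le_mul_rpow_add_rpow {a b p : ℝ} (ha : 0 ≤ a) (hb : 0 ≤ b) (hp : 1 ≤ p) :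
    (a + b) ^ p ≤ 2 ^ (p - 1) * (a ^ p + b ^ p) := by
  lift a to NNReal using ha
  lift b to NNReal using hb
  exact_mod_cast NNReal.rpow_add_le_mul_rpow_add_rpow a b hp

lemma Real.rpow_eq_sq_rpow_half {t : ℝ} (ht : 0 ≤ t) (p : ℝ) : t ^ p = (t ^ 2) ^ (p / 2) := by
  rw [← Real.rpow_natCast_mul ht]
  congr 1
  push_cast
  ring

section Clarkson

variable {𝕜 E : Type*} [RCLike 𝕜] [NormedAddCommGroup E] [InnerProductSpace 𝕜 E] {p : ℝ}

include 𝕜 in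
theorem norm_add_rpow_add_norm_sub_rpow_le (hp : 2 ≤ p) (x y : E) :
    ‖x + y‖ ^ p + ‖x - y‖ ^ p ≤ 2 ^ (p - 1) * (‖x‖ ^ p + ‖y‖ ^ p) := by
  have hq : 1 ≤ p / 2 := by linarith
  simp only [Real.rpow_eq_sq_rpow_half (norm_nonneg _) p]
  calc (‖x + y‖ ^ 2) ^ (p / 2) + (‖x - y‖ ^ 2) ^ (p / 2)
      ≤ (‖x + y‖ ^ 2 + ‖x - y‖ ^ 2) ^ (p / 2) :=
        Real.add_rpow_le_rpow_add (by positivity) (by positivity) hq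
    _ = 2 ^ (p / 2) * (‖x‖ ^ 2 + ‖y‖ ^ 2) ^ (p / 2) := by
        rw [parallelogram_law_with_norm 𝕜, Real.mul_rpow zero_le_two (by positivity)]
    _ ≤ 2 ^ (p / 2) * (2 ^ (p / 2 - 1) * ((‖x‖ ^ 2) ^ (p / 2) + (‖y‖ ^ 2) ^ (p / 2))) := by
        gcongr
        exact Real.rpow_add_le_mul_rpow_add_rpow (by positivity) (by positivity) hq
    _ = 2 ^ (p - 1) * ((‖x‖ ^ 2) ^ (p / 2) + (‖y‖ ^ 2) ^ (p / 2)) := by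
        rw [← mul_assoc, ← Real.rpow_add two_pos]
        ring_nf

theorem ContinuousLinearMap.norm_map_add_rpow_add_norm_map_sub_rpow_le {V : Type*}
    [SeminormedAddCommGroup V] [NormedSpace 𝕜 V] (hp : 2 ≤ p) (φ : V →L[𝕜] E) (hφ : ‖φ‖ ≤ 1)
    (u v : V) :
    ‖φ u + φ v‖ ^ p + ‖φ u - φ v‖ ^ p ≤ 2 ^ (p - 1) * (‖u‖ ^ p + ‖v‖ ^ p) := by
  have hφ_le (w : V) : ‖φ w‖ ≤ ‖w‖ := by simpa using φ.le_of_opNorm_le hφ w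
  calc ‖φ u + φ v‖ ^ p + ‖φ u - φ v‖ ^ p
      ≤ 2 ^ (p - 1) * (‖φ u‖ ^ p + ‖φ v‖ ^ p) := norm_add_rpow_add_norm_sub_rpow_le (𝕜 := 𝕜) hp _ _
    _ ≤ 2 ^ (p - 1) * (‖u‖ ^ p + ‖v‖ ^ p) := by
        gcongr <;> exact hφ_le _

end Clarkson

theorem nonlinear_maccone_pati_clarkson_ge_two
    {Ω : Type*} [MeasurableSpace Ω] (μ : Measure Ω) (p : ℝ) (hp : 2 ≤ p) [Fact (1 ≤ ENNReal.ofReal p)]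
    (M N : Set (Lp ℂ (ENNReal.ofReal p) μ))
    (A : M → Lp ℂ (ENNReal.ofReal p) μ) (B : N → Lp ℂ (ENNReal.ofReal p) μ)
    (f : Lp ℂ (ENNReal.ofReal p) μ) (hfM : f ∈ M) (hfN : f ∈ N) (a b : ℂ)
    (φ : Lp ℂ (ENNReal.ofReal p) μ →L[ℂ] ℂ) (hφ : ‖φ‖ ≤ 1) (hφf : φ f = 0) :
    ‖A ⟨f, hfM⟩ - a • f‖ ^ p + ‖B ⟨f, hfN⟩ - b • f‖ ^ p ≥
      (1 / 2 ^ (p - 1)) *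
        (‖φ (A ⟨f, hfM⟩ + B ⟨f, hfN⟩)‖ ^ p + ‖φ (A ⟨f, hfM⟩ - B ⟨f, hfN⟩)‖ ^ p) := by
  set u := A ⟨f, hfM⟩ - a • f
  set v := B ⟨f, hfN⟩ - b • f
  have h_add : φ (A ⟨f, hfM⟩ + B ⟨f, hfN⟩) = φ u + φ v := by
    simp only [u, v, map_add, map_sub, map_smul, hφf, smul_zero, sub_zero]
  have h_sub : φ (A ⟨f, hfM⟩ - B ⟨f, hfN⟩) = φ u - φ v := by
    simp only [u, v, map_sub, map_smul, hφf, smul_zero, sub_zero]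
  rw [ge_iff_le, one_div, inv_mul_le_iff₀ (by positivity), h_add, h_sub]
  exact φ.norm_map_add_rpow_add_norm_map_sub_rpow_le hp hφ u v
end

section
/- Let (Ω, μ) be a measure space, 1 < p ≤ 2 with conjugate exponent q = p/(p−1), M, N ⊆ L^p(Ω, μ), A : M → L^p(Ω, μ), B : N → L^p(Ω, μ) arbitrary maps, f ∈ M ∩ N, a, b ∈ ℂ. Then for every bounded linear functional φ on L^p(Ω, μ) with ‖φ‖ ≤ 1 and φ(f) = 0: ‖Af − a·f‖_p^p + ‖Bf − b·f‖_p^p ≥ ((1/2)(|φ((A+B)f)|^q + |φ((A−B)f)|^q))^{1/(q−1)}. -/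
open MeasureTheory Real

open Complex Complex.HadamardThreeLines
open scoped ComplexConjugate

/-!
Since `‖φ‖ ≤ 1` and `φ f = 0`, with `u = Af - a f`, `v = Bf - b f` we have `φ (Af ± Bf) = φ u ± φ v`
and `‖φ u‖ ≤ ‖u‖`, `‖φ v‖ ≤ ‖v‖`, so it suffices to prove Clarkson's inequality for two complex
numbers. That is Hausdorff–Young on the two-point group: the matrix `[[1, 1], [1, -1]]` maps
`ℓ¹ → ℓ^∞` with norm `1` and `ℓ² → ℓ²` with norm `√2`, hence `ℓ^p → ℓ^q` with norm `2^(1/q)` by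
the three-lines theorem applied to `ζ ↦ ⟨H x_ζ, y_ζ⟩`, where `x_ζ = |x|^(p(1 - ζ/2)) sgn x`.
Duality turns the bound on the bilinear form into the `ℓ^q` bound.
-/

namespace Clarkson

-- `x / ‖x‖` is the phase of `x`, and `0` at `x = 0`.
noncomputable def phasePow (x s : ℂ) : ℂ := (‖x‖ : ℂ) ^ s * (x / ‖x‖)

lemma phasePow_one (x : ℂ) : phasePow x 1 = x := by
  rcases eq_or_ne x 0 with rfl | hx
  · simp [phasePow]
  · rw [phasePow, cpow_one, mul_div_cancel₀ _ (by simpa using hx)]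

lemma norm_phasePow {s : ℂ} (hs : 0 < s.re) (x : ℂ) : ‖phasePow x s‖ = ‖x‖ ^ s.re := by
  rcases eq_or_ne x 0 with rfl | hx
  · simp [phasePow, Real.zero_rpow hs.ne']
  · have hx' : 0 < ‖x‖ := norm_pos_iff.2 hx
    rw [phasePow, norm_mul, norm_cpow_eq_rpow_re_of_pos hx', norm_div, norm_real, norm_norm,
      div_self hx'.ne', mul_one]

lemma differentiable_phasePow (x : ℂ) : Differentiable ℂ (phasePow x) := by
  rcases eq_or_ne x 0 with rfl | hx
  · have h0 : phasePow 0 = fun _ ↦ 0 := by ext; simp [phasePow]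
    exact h0 ▸ differentiable_const 0
  · have hx' : (‖x‖ : ℂ) ≠ 0 := by simpa using hx
    exact (differentiable_id.const_cpow (Or.inl hx')).mul_const _

lemma norm_phasePow_strip {p : ℝ} (hp : 0 < p) {ζ : ℂ} (hζ : ζ.re < 2) (x : ℂ) :
    ‖phasePow x (p * (1 - ζ / 2))‖ = ‖x‖ ^ (p * (1 - ζ.re / 2)) := by
  have hre : ((p : ℂ) * (1 - ζ / 2)).re = p * (1 - ζ.re / 2) := by simp
  rw [norm_phasePow (by rw [hre]; nlinarith), hre]

lemma rpow_le_max_one_rpow {t e r : ℝ} (ht : 0 ≤ t) (he : 0 ≤ e) (her : e ≤ r) :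
    t ^ e ≤ max 1 t ^ r :=
  calc t ^ e ≤ max 1 t ^ e := by gcongr; exact le_max_right _ _
    _ ≤ max 1 t ^ r := Real.rpow_le_rpow_of_exponent_le (le_max_left _ _) her

def hadamardPairing (x₁ x₂ y₁ y₂ : ℂ) : ℂ := (x₁ + x₂) * y₁ + (x₁ - x₂) * y₂

lemma norm_hadamardPairing_le (x₁ x₂ y₁ y₂ : ℂ) :
    ‖hadamardPairing x₁ x₂ y₁ y₂‖ ≤ ‖x₁ + x₂‖ * ‖y₁‖ + ‖x₁ - x₂‖ * ‖y₂‖ :=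
  (norm_add_le _ _).trans_eq (by rw [norm_mul, norm_mul])

lemma norm_hadamardPairing_le_norm_add_mul_norm_add (x₁ x₂ y₁ y₂ : ℂ) :
    ‖hadamardPairing x₁ x₂ y₁ y₂‖ ≤ (‖x₁‖ + ‖x₂‖) * (‖y₁‖ + ‖y₂‖) :=
  calc _ ≤ ‖x₁ + x₂‖ * ‖y₁‖ + ‖x₁ - x₂‖ * ‖y₂‖ := norm_hadamardPairing_le _ _ _ _
    _ ≤ (‖x₁‖ + ‖x₂‖) * ‖y₁‖ + (‖x₁‖ + ‖x₂‖) * ‖y₂‖ := by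
      gcongr
      exacts [norm_add_le _ _, norm_sub_le _ _]
    _ = _ := by ring

lemma sq_norm_hadamardPairing_le (x₁ x₂ y₁ y₂ : ℂ) :
    ‖hadamardPairing x₁ x₂ y₁ y₂‖ ^ 2 ≤ 2 * (‖x₁‖ ^ 2 + ‖x₂‖ ^ 2) * (‖y₁‖ ^ 2 + ‖y₂‖ ^ 2) :=
  calc _ ≤ (‖x₁ + x₂‖ * ‖y₁‖ + ‖x₁ - x₂‖ * ‖y₂‖) ^ 2 := by
        gcongr; exact norm_hadamardPairing_le _ _ _ _
    _ ≤ (‖x₁ + x₂‖ ^ 2 + ‖x₁ - x₂‖ ^ 2) * (‖y₁‖ ^ 2 + ‖y₂‖ ^ 2) := by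
        nlinarith [sq_nonneg (‖x₁ + x₂‖ * ‖y₂‖ - ‖x₁ - x₂‖ * ‖y₁‖)]
    _ = _ := by rw [parallelogram_law_with_norm ℝ]

lemma interpolation_bound_eq {p q K : ℝ} (hpq : p.HolderConjugate q) (hK : 0 ≤ K) :
    K ^ (1 - 2 * q⁻¹) * √(2 * K) ^ (2 * q⁻¹) = 2 ^ q⁻¹ * K ^ p⁻¹ := by
  have hsum : 1 - 2 * q⁻¹ + 1 / 2 * (2 * q⁻¹) = p⁻¹ := by
    linarith [hpq.inv_add_inv_eq_one]
  rw [Real.sqrt_eq_rpow, ← Real.rpow_mul (by positivity), Real.mul_rpow zero_le_two hK,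
    mul_left_comm, ← Real.rpow_add' hK (hsum ▸ hpq.inv_ne_zero), hsum]
  congr 2
  ring

lemma norm_hadamardPairing_le_rpow {p q : ℝ} (hpq : p.HolderConjugate q) (hp2 : p ≤ 2)
    (x₁ x₂ y₁ y₂ : ℂ) :
    ‖hadamardPairing x₁ x₂ y₁ y₂‖ ≤
      2 ^ q⁻¹ * ((‖x₁‖ ^ p + ‖x₂‖ ^ p) * (‖y₁‖ ^ p + ‖y₂‖ ^ p)) ^ p⁻¹ := by
  set K := (‖x₁‖ ^ p + ‖x₂‖ ^ p) * (‖y₁‖ ^ p + ‖y₂‖ ^ p)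
  have hp := hpq.pos
  let F : ℂ → ℂ → ℂ := fun x ζ ↦ phasePow x (p * (1 - ζ / 2))
  let G : ℂ → ℂ := fun ζ ↦ hadamardPairing (F x₁ ζ) (F x₂ ζ) (F y₁ ζ) (F y₂ ζ)
  have hnorm {ζ : ℂ} (hζ : ζ.re ≤ 1) (x : ℂ) : ‖F x ζ‖ = ‖x‖ ^ (p * (1 - ζ.re / 2)) :=
    norm_phasePow_strip hp (by linarith) x
  have hG : DiffContOnCl ℂ G (verticalStrip 0 1) := by
    have hF (x : ℂ) : Differentiable ℂ (F x) := (differentiable_phasePow x).comp (by fun_prop)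
    exact (((hF x₁).add (hF x₂)).mul (hF y₁)).add (((hF x₁).sub (hF x₂)).mul (hF y₂))
      |>.diffContOnCl
  have hbdd : BddAbove ((norm ∘ G) '' verticalClosedStrip 0 1) := by
    refine ⟨(max 1 ‖x₁‖ ^ p + max 1 ‖x₂‖ ^ p) * (max 1 ‖y₁‖ ^ p + max 1 ‖y₂‖ ^ p), ?_⟩
    rintro _ ⟨ζ, ⟨hζ₀, hζ₁⟩, rfl⟩
    refine (norm_hadamardPairing_le_norm_add_mul_norm_add _ _ _ _).trans ?_
    simp only [hnorm hζ₁]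
    gcongr <;> exact rpow_le_max_one_rpow (norm_nonneg _) (by nlinarith) (by nlinarith)
  have hedge₀ : ∀ ζ ∈ re ⁻¹' {0}, ‖G ζ‖ ≤ K := by
    intro ζ (hζ : ζ.re = 0)
    refine (norm_hadamardPairing_le_norm_add_mul_norm_add _ _ _ _).trans_eq ?_
    simp only [hnorm (hζ.trans_le zero_le_one), hζ]
    norm_num [K]
  have hedge₁ : ∀ ζ ∈ re ⁻¹' {1}, ‖G ζ‖ ≤ √(2 * K) := by
    intro ζ (hζ : ζ.re = 1)
    have hsq (x : ℂ) : ‖F x ζ‖ ^ 2 = ‖x‖ ^ p := by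
      rw [hnorm hζ.le, hζ, ← Real.rpow_natCast, ← Real.rpow_mul (norm_nonneg _)]
      ring_nf
    rw [Real.le_sqrt (norm_nonneg _) (by positivity)]
    refine (sq_norm_hadamardPairing_le _ _ _ _).trans_eq ?_
    simp only [hsq]
    ring
  -- interpolate at `θ = 2 / q`, where `F x θ = x`
  have hq_inv : q⁻¹ = 1 - p⁻¹ := hpq.one_sub_inv.symm
  have hθ : ((2 * q⁻¹ : ℝ) : ℂ) ∈ verticalClosedStrip 0 1 := by
    have : 2⁻¹ ≤ p⁻¹ := inv_anti₀ hp hp2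
    simp only [verticalClosedStrip, Set.mem_preimage, ofReal_re, Set.mem_Icc]
    constructor <;> linarith [hpq.symm.inv_pos]
  have hFθ (x : ℂ) : F x (2 * q⁻¹ : ℝ) = x := by
    have hreal : p * (1 - 2 * q⁻¹ / 2) = 1 := by rw [hq_inv]; field_simp; ring
    have hcomplex : (p : ℂ) * (1 - ((2 * q⁻¹ : ℝ) : ℂ) / 2) = 1 := by exact_mod_cast hreal
    simp only [F, hcomplex, phasePow_one]
  have key := norm_le_interp_of_mem_verticalClosedStrip₀₁' G hθ hG hbdd hedge₀ hedge₁
  simp only [G, hFθ, ofReal_re] at key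
  exact key.trans_eq (interpolation_bound_eq hpq (by positivity))

noncomputable def holderDual (q : ℝ) (a : ℂ) : ℂ := conj a * (‖a‖ ^ (q - 2) : ℝ)

lemma mul_holderDual {q : ℝ} (hq : q ≠ 0) (a : ℂ) : a * holderDual q a = (‖a‖ ^ q : ℝ) := by
  rcases eq_or_ne a 0 with rfl | ha
  · simp [holderDual, Real.zero_rpow hq]
  · rw [holderDual, ← mul_assoc, mul_conj', ← ofReal_pow, ← ofReal_mul, ← Real.rpow_natCast,
      ← Real.rpow_add (norm_pos_iff.2 ha)]
    norm_num

lemma norm_holderDual {q : ℝ} (hq : q ≠ 1) (a : ℂ) : ‖holderDual q a‖ = ‖a‖ ^ (q - 1) := by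
  rcases eq_or_ne a 0 with rfl | ha
  · simp [holderDual, Real.zero_rpow (sub_ne_zero.2 hq)]
  · rw [holderDual, norm_mul, norm_conj,
      Complex.norm_of_nonneg (Real.rpow_nonneg (norm_nonneg a) _), show q - 1 = q - 2 + 1 by ring, Real.rpow_add_one (norm_ne_zero_iff.2 ha), mul_comm]

lemma sum_rpow_le_of_forall_norm_sum_mul_le {ι : Type*} [Fintype ι] {p q C : ℝ}
    (hpq : p.HolderConjugate q) (hC : 0 ≤ C) (a : ι → ℂ)
    (h : ∀ y : ι → ℂ, ‖∑ i, a i * y i‖ ≤ C * (∑ i, ‖y i‖ ^ p) ^ p⁻¹) :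
    ∑ i, ‖a i‖ ^ q ≤ C ^ q := by
  set S := ∑ i, ‖a i‖ ^ q
  rcases (show 0 ≤ S by positivity).eq_or_lt with hS | hS
  · rw [← hS]
    positivity
  have hpair : ∑ i, a i * holderDual q (a i) = S := by
    simp only [mul_holderDual hpq.symm.ne_zero, S]
    push_cast
    rfl
  have hnorm : ∑ i, ‖holderDual q (a i)‖ ^ p = S := Finset.sum_congr rfl fun i _ ↦ by
    rw [norm_holderDual hpq.symm.lt.ne', ← Real.rpow_mul (norm_nonneg _),
      hpq.symm.sub_one_mul_conj]
  have hdual := h fun i ↦ holderDual q (a i)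
  rw [hpair, hnorm, norm_real, Real.norm_of_nonneg hS.le] at hdual
  have hsplit : S = S ^ p⁻¹ * S ^ q⁻¹ := by
    rw [← Real.rpow_add hS, hpq.inv_add_inv_eq_one, Real.rpow_one]
  have hS_le : S ^ q⁻¹ ≤ C :=
    le_of_mul_le_mul_left (by rwa [← hsplit, mul_comm]) (Real.rpow_pos_of_pos hS _)
  calc S = (S ^ q⁻¹) ^ q := (Real.rpow_inv_rpow hS.le hpq.symm.ne_zero).symm
    _ ≤ C ^ q := by gcongr; exact hpq.symm.nonneg

theorem norm_add_rpow_add_norm_sub_rpow_le {p q : ℝ} (hpq : p.HolderConjugate q) (hp2 : p ≤ 2)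
    (z w : ℂ) : ‖z + w‖ ^ q + ‖z - w‖ ^ q ≤ 2 * (‖z‖ ^ p + ‖w‖ ^ p) ^ (q - 1) := by
  have hX : 0 ≤ ‖z‖ ^ p + ‖w‖ ^ p := by positivity
  have h := sum_rpow_le_of_forall_norm_sum_mul_le hpq
    (C := 2 ^ q⁻¹ * (‖z‖ ^ p + ‖w‖ ^ p) ^ p⁻¹) (by positivity) ![z + w, z - w] fun y ↦ by
      have hy := norm_hadamardPairing_le_rpow hpq hp2 z w (y 0) (y 1)
      rw [Real.mul_rpow hX (by positivity), ← mul_assoc] at hy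
      simpa [Fin.sum_univ_two, hadamardPairing] using hy
  rwa [Fin.sum_univ_two, Real.mul_rpow (by positivity) (by positivity),
    Real.rpow_inv_rpow zero_le_two hpq.symm.ne_zero, ← Real.rpow_mul hX, inv_mul_eq_div,
    hpq.symm.div_conj_eq_sub_one] at h

theorem scalar_inequality {p q : ℝ} (hpq : p.HolderConjugate q) (hp2 : p ≤ 2) (z w : ℂ) :
    ((1 / 2) * (‖z + w‖ ^ q + ‖z - w‖ ^ q)) ^ (1 / (q - 1)) ≤ ‖z‖ ^ p + ‖w‖ ^ p := by
  have hq1 : 0 < q - 1 := sub_pos.2 hpq.symm.lt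
  calc _ ≤ ((‖z‖ ^ p + ‖w‖ ^ p) ^ (q - 1)) ^ (1 / (q - 1)) := by
        gcongr
        linarith [norm_add_rpow_add_norm_sub_rpow_le hpq hp2 z w]
    _ = _ := by rw [← Real.rpow_mul (by positivity), mul_one_div_cancel hq1.ne', Real.rpow_one]

end Clarkson

theorem nonlinear_maccone_pati_clarkson_conj_le_two
    {Ω : Type*} [MeasurableSpace Ω] (μ : Measure Ω) (p q : ℝ) (hp1 : 1 < p) (hp2 : p ≤ 2)
    (hq : q = p / (p - 1)) [Fact (1 ≤ ENNReal.ofReal p)]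
    (M N : Set (Lp ℂ (ENNReal.ofReal p) μ))
    (A : M → Lp ℂ (ENNReal.ofReal p) μ) (B : N → Lp ℂ (ENNReal.ofReal p) μ)
    (f : Lp ℂ (ENNReal.ofReal p) μ) (hfM : f ∈ M) (hfN : f ∈ N) (a b : ℂ)
    (φ : Lp ℂ (ENNReal.ofReal p) μ →L[ℂ] ℂ) (hφ : ‖φ‖ ≤ 1) (hφf : φ f = 0) :
    ‖A ⟨f, hfM⟩ - a • f‖ ^ p + ‖B ⟨f, hfN⟩ - b • f‖ ^ p ≥
      ((1 / 2) *
        (‖φ (A ⟨f, hfM⟩ + B ⟨f, hfN⟩)‖ ^ q + ‖φ (A ⟨f, hfM⟩ - B ⟨f, hfN⟩)‖ ^ q))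
          ^ (1 / (q - 1)) := by
  have hpq : p.HolderConjugate q := (Real.holderConjugate_iff_eq_conjExponent hp1).2 hq
  set u := A ⟨f, hfM⟩ - a • f
  set v := B ⟨f, hfN⟩ - b • f
  have hadd : φ (A ⟨f, hfM⟩ + B ⟨f, hfN⟩) = φ u + φ v := by simp [u, v, hφf]
  have hsub : φ (A ⟨f, hfM⟩ - B ⟨f, hfN⟩) = φ u - φ v := by simp [u, v, hφf]
  have hφ_le (g : Lp ℂ (ENNReal.ofReal p) μ) : ‖φ g‖ ^ p ≤ ‖g‖ ^ p := by
    gcongr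
    exact (φ.le_of_opNorm_le hφ g).trans_eq (one_mul _)
  rw [hadd, hsub, ge_iff_le]
  exact (Clarkson.scalar_inequality hpq hp2 _ _).trans (add_le_add (hφ_le u) (hφ_le v))
end

section
/- Let 1 < p < 2. Then for all x, y in ℓ^p(ℕ) (complex sequences with summable p-th power of modulus), ‖x + y‖_p² + (p − 1)‖x − y‖_p² ≤ 2(‖x‖_p² + ‖y‖_p²). -/
/-!
The key is the two-point inequality
`(‖a‖ ^ 2 + (p - 1) ‖b‖ ^ 2) ^ (p / 2) ≤ (‖a + b‖ ^ p + ‖a - b‖ ^ p) / 2` for `1 ≤ p ≤ 2`.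
For reals `a = m ≥ |d| = |b|`, after scaling to `m = 1`, it follows from Bernoulli's inequality
and `2 + p (p - 1) t ^ 2 ≤ (1 + t) ^ p + (1 - t) ^ p` on `[0, 1]`, proved by differentiating
twice. In an inner product space the parallelogram law and `|‖a + b‖ - ‖a - b‖| ≤ 2 ‖b‖` reduce
it to the real case with `m ± d = ‖a ± b‖`.

For `u, v ∈ ℓ^p`, summing it over the coordinates, the reverse Minkowski inequality in
`ℓ^(p/2)` and the power mean inequality give
`‖u‖ ^ 2 + (p - 1) ‖v‖ ^ 2 ≤ ((‖u + v‖ ^ p + ‖u - v‖ ^ p) / 2) ^ (2 / p)`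
`≤ (‖u + v‖ ^ 2 + ‖u - v‖ ^ 2) / 2`, which for `u = x + y`, `v = x - y` is the theorem.
-/

open Real Set

theorem Real.sq_rpow_div_two {x : ℝ} (hx : 0 ≤ x) (p : ℝ) : (x ^ 2) ^ (p / 2) = x ^ p := by
  rw [rpow_div_two_eq_sqrt _ (sq_nonneg x), sqrt_sq hx]

theorem two_le_one_add_rpow_add_one_sub_rpow {s t : ℝ} (hs : s ≤ 0) (ht : |t| < 1) :
    2 ≤ (1 + t) ^ s + (1 - t) ^ s := by
  obtain ⟨hplus, hminus⟩ : 0 < 1 + t ∧ 0 < 1 - t := by constructor <;> linarith [abs_lt.mp ht]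
  have hprod : 1 ≤ (1 + t) ^ (s / 2) * (1 - t) ^ (s / 2) := by
    rw [← mul_rpow hplus.le hminus.le]
    exact one_le_rpow_of_pos_of_le_one_of_nonpos (by positivity) (by nlinarith [sq_nonneg t])
      (by linarith)
  have hsq : ∀ {x : ℝ}, 0 < x → x ^ s = (x ^ (s / 2)) ^ 2 := fun hx => by
    rw [← rpow_natCast, ← rpow_mul hx.le]; norm_num
  rw [hsq hplus, hsq hminus]
  nlinarith [two_mul_le_add_sq ((1 + t) ^ (s / 2)) ((1 - t) ^ (s / 2))]

theorem apply_left_le_of_hasDerivAt_nonneg {f f' : ℝ → ℝ} {a b x : ℝ}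
    (hf : ContinuousOn f (Icc a b)) (hderiv : ∀ y ∈ Ioo a b, HasDerivAt f (f' y) y)
    (hf' : ∀ y ∈ Ioo a b, 0 ≤ f' y) (hx : x ∈ Icc a b) : f a ≤ f x :=
  monotoneOn_of_hasDerivWithinAt_nonneg (convex_Icc a b) hf
    (fun y hy => (hderiv y (by rwa [interior_Icc] at hy)).hasDerivWithinAt)
    (fun y hy => hf' y (by rwa [interior_Icc] at hy)) (left_mem_Icc.2 (hx.1.trans hx.2)) hx hx.1

theorem two_mul_mul_le_one_add_rpow_sub_one_sub_rpow {q t : ℝ} (hq0 : 0 ≤ q) (hq1 : q ≤ 1)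
    (ht : t ∈ Icc 0 1) : 2 * q * t ≤ (1 + t) ^ q - (1 - t) ^ q := by
  have hmono := apply_left_le_of_hasDerivAt_nonneg (a := 0) (b := 1)
    (f := fun x => (1 + x) ^ q - (1 - x) ^ q - 2 * q * x)
    (f' := fun x => q * ((1 + x) ^ (q - 1) + (1 - x) ^ (q - 1) - 2))
    (by fun_prop (disch := assumption))
    (fun x hx => by
      have dplus := ((hasDerivAt_id' x).const_add 1).rpow_const (p := q)
        (Or.inl (by linarith [hx.1]))
      have dminus := ((hasDerivAt_id' x).const_sub 1).rpow_const (p := q)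
        (Or.inl (by linarith [hx.2]))
      exact ((dplus.sub dminus).sub ((hasDerivAt_id' x).const_mul (2 * q))).congr_deriv (by ring))
    (fun x hx => mul_nonneg hq0 (by
      linarith [two_le_one_add_rpow_add_one_sub_rpow (s := q - 1) (t := x) (by linarith)
        (abs_lt.2 ⟨by linarith [hx.1], hx.2⟩)]))
    ht
  simp only [add_zero, one_rpow, sub_zero, sub_self, mul_zero, sub_nonneg] at hmono
  linarith

theorem two_add_mul_sq_le_one_add_rpow_add_one_sub_rpow {p t : ℝ} (hp1 : 1 ≤ p) (hp2 : p ≤ 2)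
    (ht : t ∈ Icc 0 1) : 2 + p * (p - 1) * t ^ 2 ≤ (1 + t) ^ p + (1 - t) ^ p := by
  have hmono := apply_left_le_of_hasDerivAt_nonneg (a := 0) (b := 1)
    (f := fun x => (1 + x) ^ p + (1 - x) ^ p - p * (p - 1) * x ^ 2)
    (f' := fun x => p * ((1 + x) ^ (p - 1) - (1 - x) ^ (p - 1) - 2 * (p - 1) * x))
    (by fun_prop (disch := linarith))
    (fun x hx => by
      have dplus := ((hasDerivAt_id' x).const_add 1).rpow_const (p := p)
        (Or.inl (by linarith [hx.1]))
      have dminus := ((hasDerivAt_id' x).const_sub 1).rpow_const (p := p)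
        (Or.inl (by linarith [hx.2]))
      exact ((dplus.add dminus).sub ((hasDerivAt_pow 2 x).const_mul (p * (p - 1)))).congr_deriv
        (by ring))
    (fun x hx => mul_nonneg (by linarith) (by
      linarith [two_mul_mul_le_one_add_rpow_sub_one_sub_rpow (q := p - 1) (t := x) (by linarith)
        (by linarith) (Ioo_subset_Icc_self hx)]))
    ht
  simp only [add_zero, one_rpow, sub_zero, zero_pow two_ne_zero, mul_zero] at hmono
  linarith

theorem one_add_mul_sq_rpow_le {p t : ℝ} (hp1 : 1 ≤ p) (hp2 : p ≤ 2) (ht : t ∈ Icc 0 1) :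
    (1 + (p - 1) * t ^ 2) ^ (p / 2) ≤ ((1 + t) ^ p + (1 - t) ^ p) / 2 := by
  have hbernoulli := rpow_one_add_le_one_add_mul_self (s := (p - 1) * t ^ 2)
    (by nlinarith [sq_nonneg t]) (p := p / 2) (by linarith) (by linarith)
  linarith [two_add_mul_sq_le_one_add_rpow_add_one_sub_rpow hp1 hp2 ht]

theorem sq_add_mul_sq_rpow_le {p m d : ℝ} (hp1 : 1 ≤ p) (hp2 : p ≤ 2) (hd : |d| ≤ m) :
    (m ^ 2 + (p - 1) * d ^ 2) ^ (p / 2) ≤ ((m + d) ^ p + (m - d) ^ p) / 2 := by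
  wlog hd0 : 0 ≤ d generalizing d
  · have := this (d := -d) (by rwa [abs_neg]) (by linarith)
    rwa [neg_sq, ← sub_eq_add_neg, sub_neg_eq_add, add_comm ((m - d) ^ p)] at this
  obtain rfl | hm := (abs_nonneg d |>.trans hd).eq_or_lt
  · obtain rfl : d = 0 := abs_nonpos_iff.1 hd
    simp [zero_rpow (by linarith : p ≠ 0), zero_rpow (by linarith : p / 2 ≠ 0)]
  have ht : d / m ∈ Icc 0 1 := ⟨by positivity, (div_le_one hm).2 (abs_le.1 hd).2⟩
  calc (m ^ 2 + (p - 1) * d ^ 2) ^ (p / 2)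
      = (m ^ 2 * (1 + (p - 1) * (d / m) ^ 2)) ^ (p / 2) := by field_simp
    _ = m ^ p * (1 + (p - 1) * (d / m) ^ 2) ^ (p / 2) := by
        rw [mul_rpow (by positivity) (by nlinarith [sq_nonneg (d / m)]),
          sq_rpow_div_two hm.le]
    _ ≤ m ^ p * (((1 + d / m) ^ p + (1 - d / m) ^ p) / 2) :=
        mul_le_mul_of_nonneg_left (one_add_mul_sq_rpow_le hp1 hp2 ht) (by positivity)
    _ = ((m * (1 + d / m)) ^ p + (m * (1 - d / m)) ^ p) / 2 := by
        rw [mul_rpow hm.le (by linarith [ht.1]), mul_rpow hm.le (by linarith [ht.2])]; ring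
    _ = ((m + d) ^ p + (m - d) ^ p) / 2 := by field_simp

theorem norm_sq_add_mul_norm_sq_rpow_le {E : Type*} [NormedAddCommGroup E]
    [InnerProductSpace ℝ E] {p : ℝ} (hp1 : 1 ≤ p) (hp2 : p ≤ 2) (a b : E) :
    (‖a‖ ^ 2 + (p - 1) * ‖b‖ ^ 2) ^ (p / 2) ≤ (‖a + b‖ ^ p + ‖a - b‖ ^ p) / 2 := by
  set m := (‖a + b‖ + ‖a - b‖) / 2 with hm
  set d := (‖a + b‖ - ‖a - b‖) / 2 with hd
  have hdm : |d| ≤ m :=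
    abs_le.2 ⟨by linarith [norm_nonneg (a + b)], by linarith [norm_nonneg (a - b)]⟩
  have hdb : |d| ≤ ‖b‖ := by
    have := abs_norm_sub_norm_le (a + b) (a - b)
    rw [add_sub_sub_cancel, ← two_smul ℝ b, norm_smul, Real.norm_two] at this
    rw [abs_div, abs_two]; linarith
  have hmd : m ^ 2 + d ^ 2 = ‖a‖ ^ 2 + ‖b‖ ^ 2 := by
    have := parallelogram_law_with_norm ℝ a b
    rw [hm, hd]; linarith
  have hle : ‖a‖ ^ 2 + (p - 1) * ‖b‖ ^ 2 ≤ m ^ 2 + (p - 1) * d ^ 2 := by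
    have : d ^ 2 ≤ ‖b‖ ^ 2 := sq_le_sq.2 (by rwa [abs_norm])
    nlinarith
  calc (‖a‖ ^ 2 + (p - 1) * ‖b‖ ^ 2) ^ (p / 2)
      ≤ (m ^ 2 + (p - 1) * d ^ 2) ^ (p / 2) := by gcongr
    _ ≤ ((m + d) ^ p + (m - d) ^ p) / 2 := sq_add_mul_sq_rpow_le hp1 hp2 hdm
    _ = (‖a + b‖ ^ p + ‖a - b‖ ^ p) / 2 := by rw [hm, hd]; ring_nf

theorem Real.rpow_add_rpow_div_two_rpow_le {p a b : ℝ} (hp0 : 0 < p) (hp2 : p ≤ 2) (ha : 0 ≤ a)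
    (hb : 0 ≤ b) : ((a ^ p + b ^ p) / 2) ^ (2 / p) ≤ (a ^ 2 + b ^ 2) / 2 := by
  have hpow : ∀ {x : ℝ}, 0 ≤ x → (x ^ p) ^ (2 / p) = x ^ 2 := fun hx => by
    rw [← rpow_mul hx, mul_div_cancel₀ _ hp0.ne', rpow_two]
  have := (convexOn_rpow (p := 2 / p) ((one_le_div hp0).2 hp2)).2
    (rpow_nonneg ha p) (rpow_nonneg hb p) (by norm_num : (0 : ℝ) ≤ 1 / 2)
    (by norm_num : (0 : ℝ) ≤ 1 / 2) (by norm_num)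
  simp only [smul_eq_mul, hpow ha, hpow hb] at this
  rw [show (a ^ p + b ^ p) / 2 = 1 / 2 * a ^ p + 1 / 2 * b ^ p by ring]
  linarith

theorem Real.Lp_add_le_tsum_of_le_one {ι : Type*} {s : ℝ} (hs0 : 0 < s) (hs1 : s ≤ 1)
    {f g : ι → ℝ} (hf : ∀ i, 0 ≤ f i) (hg : ∀ i, 0 ≤ g i) (hf_sum : Summable fun i => f i ^ s)
    (hg_sum : Summable fun i => g i ^ s) :
    (∑' i, f i ^ s) ^ s⁻¹ + (∑' i, g i ^ s) ^ s⁻¹ ≤ (∑' i, (f i + g i) ^ s) ^ s⁻¹ := by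
  set r := ENNReal.ofReal s⁻¹
  have hr : r.toReal = s⁻¹ := ENNReal.toReal_ofReal (by positivity)
  have : Fact (1 ≤ r) := ⟨by simpa [r] using one_le_inv_iff₀.2 ⟨hs0, hs1⟩⟩
  have hnorm : ∀ {X Y : ℝ}, 0 ≤ X → 0 ≤ Y →
      ‖WithLp.toLp r (X, Y)‖ = (X ^ s⁻¹ + Y ^ s⁻¹) ^ s := by
    intro X Y hX hY
    rw [WithLp.prod_norm_eq_add (by rw [hr]; positivity), hr, one_div, inv_inv]
    simp [abs_of_nonneg, hX, hY]
  -- Reverse Minkowski is the triangle inequality of `ℓ^(1/s)` on `ℝ × ℝ`, applied to `∑' i, w i`.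
  set w : ι → WithLp r (ℝ × ℝ) := fun i => WithLp.toLp r (f i ^ s, g i ^ s)
  have hw : HasSum w (WithLp.toLp r (∑' i, f i ^ s, ∑' i, g i ^ s)) :=
    (WithLp.prodContinuousLinearEquiv r ℝ ℝ ℝ).symm.toContinuousLinearMap.hasSum
      (hf_sum.hasSum.prodMk hg_sum.hasSum)
  have hw_norm : ∀ i, ‖w i‖ = (f i + g i) ^ s := fun i => by
    rw [hnorm (rpow_nonneg (hf i) s) (rpow_nonneg (hg i) s), rpow_rpow_inv (hf i) hs0.ne',
      rpow_rpow_inv (hg i) hs0.ne']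
  have hw_summable : Summable fun i => ‖w i‖ := by
    simp only [hw_norm]
    exact (hf_sum.add hg_sum).of_nonneg_of_le
      (fun i => rpow_nonneg (add_nonneg (hf i) (hg i)) s)
      (fun i => rpow_add_le_add_rpow (hf i) (hg i) hs0.le hs1)
  have hsum_nonneg : ∀ {h : ι → ℝ}, (∀ i, 0 ≤ h i) → 0 ≤ ∑' i, h i ^ s :=
    fun hh => tsum_nonneg fun i => rpow_nonneg (hh i) s
  have htriangle := norm_tsum_le_tsum_norm hw_summable
  rw [hw.tsum_eq, hnorm (hsum_nonneg hf) (hsum_nonneg hg)] at htriangle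
  simp only [hw_norm] at htriangle
  have hlhs : 0 ≤ (∑' i, f i ^ s) ^ s⁻¹ + (∑' i, g i ^ s) ^ s⁻¹ :=
    add_nonneg (rpow_nonneg (hsum_nonneg hf) _) (rpow_nonneg (hsum_nonneg hg) _)
  calc (∑' i, f i ^ s) ^ s⁻¹ + (∑' i, g i ^ s) ^ s⁻¹
      = (((∑' i, f i ^ s) ^ s⁻¹ + (∑' i, g i ^ s) ^ s⁻¹) ^ s) ^ s⁻¹ :=
        (rpow_rpow_inv hlhs hs0.ne').symm
    _ ≤ (∑' i, (f i + g i) ^ s) ^ s⁻¹ :=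
        rpow_le_rpow (rpow_nonneg hlhs s) htriangle (by positivity)

theorem lp.norm_sq_add_mul_norm_sq_le {ι E : Type*} [NormedAddCommGroup E]
    [InnerProductSpace ℝ E] {p : ℝ} (hp1 : 1 ≤ p) (hp2 : p ≤ 2)
    (u v : lp (fun _ : ι => E) (ENNReal.ofReal p)) :
    ‖u‖ ^ 2 + (p - 1) * ‖v‖ ^ 2 ≤ (‖u + v‖ ^ 2 + ‖u - v‖ ^ 2) / 2 := by
  have hp0 : 0 < p := by linarith
  have hs : (p / 2)⁻¹ = 2 / p := inv_div p 2
  have hsum : ∀ w : lp (fun _ : ι => E) (ENNReal.ofReal p),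
      HasSum (fun i => ‖w i‖ ^ p) (‖w‖ ^ p) := fun w => by
    simpa [ENNReal.toReal_ofReal hp0.le] using
      lp.hasSum_norm (by rwa [ENNReal.toReal_ofReal hp0.le]) w
  have hp1' : 0 ≤ p - 1 := by linarith
  set f := fun i => ‖u i‖ ^ 2
  set g := fun i => (p - 1) * ‖v i‖ ^ 2
  have hf : HasSum (fun i => f i ^ (p / 2)) ((‖u‖ ^ 2) ^ (p / 2)) := by
    simpa only [f, sq_rpow_div_two (norm_nonneg _), sq_rpow_div_two (lp.norm_nonneg' u)]
      using hsum u
  have hg : HasSum (fun i => g i ^ (p / 2)) (((p - 1) * ‖v‖ ^ 2) ^ (p / 2)) := by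
    simpa only [g, mul_rpow hp1' (sq_nonneg _), sq_rpow_div_two (norm_nonneg _),
      sq_rpow_div_two (lp.norm_nonneg' v)] using (hsum v).mul_left ((p - 1) ^ (p / 2))
  have hpoint : ∀ i, (f i + g i) ^ (p / 2) ≤ (‖(u + v) i‖ ^ p + ‖(u - v) i‖ ^ p) / 2 :=
    fun i => norm_sq_add_mul_norm_sq_rpow_le hp1 hp2 (u i) (v i)
  have hsum_add := ((hsum (u + v)).add (hsum (u - v))).div_const 2
  calc ‖u‖ ^ 2 + (p - 1) * ‖v‖ ^ 2
      = (∑' i, f i ^ (p / 2)) ^ (p / 2)⁻¹ + (∑' i, g i ^ (p / 2)) ^ (p / 2)⁻¹ := by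
        rw [hf.tsum_eq, hg.tsum_eq, rpow_rpow_inv (by positivity) (by positivity),
          rpow_rpow_inv (by positivity) (by positivity)]
    _ ≤ (∑' i, (f i + g i) ^ (p / 2)) ^ (p / 2)⁻¹ :=
        Real.Lp_add_le_tsum_of_le_one (by positivity) (by linarith) (fun i => by positivity)
          (fun i => mul_nonneg hp1' (by positivity)) hf.summable hg.summable
    _ ≤ (∑' i, (‖(u + v) i‖ ^ p + ‖(u - v) i‖ ^ p) / 2) ^ (p / 2)⁻¹ := by
        refine rpow_le_rpow (tsum_nonneg fun i => by positivity) ?_ (by positivity)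
        exact (hsum_add.summable.of_nonneg_of_le (fun i => by positivity) hpoint).tsum_le_tsum
          hpoint hsum_add.summable
    _ = ((‖u + v‖ ^ p + ‖u - v‖ ^ p) / 2) ^ (2 / p) := by
        rw [hs, hsum_add.tsum_eq]
    _ ≤ (‖u + v‖ ^ 2 + ‖u - v‖ ^ 2) / 2 :=
        rpow_add_rpow_div_two_rpow_le hp0 hp2 (lp.norm_nonneg' _) (lp.norm_nonneg' _)

theorem bynum_drew (p : ℝ) (hp1 : 1 < p) (hp2 : p < 2)
    (x y : lp (fun _ : ℕ => ℂ) (ENNReal.ofReal p)) :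
    ‖x + y‖ ^ 2 + (p - 1) * ‖x - y‖ ^ 2 ≤ 2 * (‖x‖ ^ 2 + ‖y‖ ^ 2) := by
  have key := lp.norm_sq_add_mul_norm_sq_le hp1.le hp2.le (x + y) (x - y)
  have hp : ENNReal.ofReal p ≠ 0 := by simpa using by linarith
  rw [add_add_sub_cancel, add_sub_sub_cancel, ← two_smul ℝ x, ← two_smul ℝ y,
    lp.norm_const_smul hp, lp.norm_const_smul hp, Real.norm_two] at key
  linarith
end

section
/- Let H be a complex Hilbert space and A : D(A) → H, B : D(B) → H self-adjoint (possibly unbounded) operators. Let h ∈ D(A) ∩ D(B) with ‖h‖ = 1, and define Δ_h(A) := ‖Ah − ⟨Ah, h⟩h‖ and similarly Δ_h(B). Then for every k ∈ H with ‖k‖ = 1 and ⟨h, k⟩ = 0: Δ_h(A)² + Δ_h(B)² ≥ (1/2)(|⟨(A + B)h, k⟩|² + |⟨(A − B)h, k⟩|²). -/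
open scoped ComplexInnerProductSpace

theorem maccone_pati_uncertainty
    {H : Type*} [NormedAddCommGroup H] [InnerProductSpace ℂ H] [CompleteSpace H]
    (DA DB : Submodule ℂ H) (A : DA →ₗ[ℂ] H) (B : DB →ₗ[ℂ] H)
    (hA : ∀ u v : DA, ⟪A u, (v : H)⟫ = ⟪(u : H), A v⟫)
    (hB : ∀ u v : DB, ⟪B u, (v : H)⟫ = ⟪(u : H), B v⟫)
    (h : H) (hhA : h ∈ DA) (hhB : h ∈ DB) (hh : ‖h‖ = 1)
    (k : H) (hk : ‖k‖ = 1) (hok : ⟪h, k⟫ = 0) :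
    ‖A ⟨h, hhA⟩ - ⟪A ⟨h, hhA⟩, h⟫ • h‖ ^ 2 + ‖B ⟨h, hhB⟩ - ⟪B ⟨h, hhB⟩, h⟫ • h‖ ^ 2 ≥
      (1 / 2) * (‖⟪A ⟨h, hhA⟩ + B ⟨h, hhB⟩, k⟫‖ ^ 2 +
                 ‖⟪A ⟨h, hhA⟩ - B ⟨h, hhB⟩, k⟫‖ ^ 2) := by
  set a : H := A ⟨h, hhA⟩
  set b : H := B ⟨h, hhB⟩
  set u : H := a - ⟪a, h⟫ • h with hu
  set v : H := b - ⟪b, h⟫ • h with hv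
  have e1 : ⟪a + b, k⟫ = ⟪u + v, k⟫ := by
    simp [hu, hv, inner_sub_left, inner_add_left, inner_smul_left, hok]
  have e2 : ⟪a - b, k⟫ = ⟪u - v, k⟫ := by
    simp [hu, hv, inner_sub_left, inner_add_left, inner_smul_left, hok]
  have b1 : ‖⟪a + b, k⟫‖ ≤ ‖u + v‖ := by
    rw [e1]
    calc ‖⟪u + v, k⟫‖ ≤ ‖u + v‖ * ‖k‖ := norm_inner_le_norm _ _
    _ = ‖u + v‖ := by rw [hk, mul_one]
  have b2 : ‖⟪a - b, k⟫‖ ≤ ‖u - v‖ := by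
    rw [e2]
    calc ‖⟪u - v, k⟫‖ ≤ ‖u - v‖ * ‖k‖ := norm_inner_le_norm _ _
    _ = ‖u - v‖ := by rw [hk, mul_one]
  have par := parallelogram_law_with_norm ℂ u v
  have n1 : (0:ℝ) ≤ ‖⟪a + b, k⟫‖ := norm_nonneg _
  have n2 : (0:ℝ) ≤ ‖⟪a - b, k⟫‖ := norm_nonneg _
  nlinarith [norm_nonneg (u + v), norm_nonneg (u - v)]
end
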